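/- arXiv:0711.3935 — 6 statements merged into one kernel-verified Lean document; each statement's English description precedes it below -/
import Mathlib

section
/- Fix an integer k ≥ 2. For integers i ≥ k+1 define ρ*_{k,i} = (k−1)/((i−1)(i−2)), and for α ∈ [0,1] define f_{k,i}(α) = Σ_{j=k}^{i−1} binom(i−1, j) α^j (1−α)^{i−1−j}. Then for every real α ∈ [0,1], the series Σ_{i=k+1}^∞ ρ*_{k,i} f_{k,i}(α) converges and its sum equals α. -/
/-!
Index the double series by `j = a + k` and `r = i - 1 - j`; all terms are nonnegative, so it may
be summed over `r` first. The identity `C(j+r, j) j (j-1) = C(j+r-2, j-2) (j+r) (j+r-1)` turns the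
sum over `r` into the negative binomial series `∑ C(r+j-2, j-2) (1-α)^r = α^{-(j-1)}`, leaving
`(k-1) α / (j (j-1))`, and these telescope over `j ≥ k` to `α`.
-/

open Filter Topology

theorem Nat.add_two_choose_add_two_mul (n a : ℕ) :
    (n + 2).choose (a + 2) * ((a + 2) * (a + 1)) = n.choose a * ((n + 2) * (n + 1)) := by
  have h₁ := Nat.add_one_mul_choose_eq n a
  have h₂ := Nat.add_one_mul_choose_eq (n + 1) (a + 1)
  calc (n + 2).choose (a + 2) * ((a + 2) * (a + 1))
      = (n + 2) * (n + 1).choose (a + 1) * (a + 1) := by rw [h₂]; ring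
    _ = (n + 2) * ((n + 1) * n.choose a) := by rw [h₁]; ring
    _ = n.choose a * ((n + 2) * (n + 1)) := by ring

theorem Antitone.hasSum_sub_succ {f : ℕ → ℝ} (hf : Antitone f)
    (h0 : Tendsto f atTop (𝓝 0)) :
    HasSum (fun n ↦ f n - f (n + 1)) (f 0) := by
  rw [hasSum_iff_tendsto_nat_of_nonneg (fun n ↦ sub_nonneg.2 (hf n.le_succ))]
  simp only [Finset.sum_range_sub']
  simpa using tendsto_const_nhds.sub h0

theorem hasSum_one_div_add_mul_add_sub_one {c : ℝ} (hc : 1 < c) :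
    HasSum (fun n : ℕ ↦ 1 / ((n + c) * (n + c - 1))) (1 / (c - 1)) := by
  have hanti : Antitone fun n : ℕ ↦ 1 / (n + c - 1) := fun m n hmn ↦ by
    have : (m : ℝ) ≤ n := by exact_mod_cast hmn
    dsimp only
    gcongr
    linarith
  have hlim : Tendsto (fun n : ℕ ↦ 1 / (n + c - 1)) atTop (𝓝 0) :=
    tendsto_const_nhds.div_atTop <|
      (tendsto_atTop_add_const_right _ (c - 1) tendsto_natCast_atTop_atTop).congr fun n ↦ by ring
  have htel := hanti.hasSum_sub_succ hlim
  simp only [Nat.cast_zero, zero_add] at htel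
  refine htel.congr_fun fun n ↦ ?_
  have h₁ : (0 : ℝ) < n + c - 1 := by linarith [n.cast_nonneg (α := ℝ)]
  have h₂ : (n : ℝ) + c ≠ 0 := by linarith
  rw [Nat.cast_succ, show (n : ℝ) + 1 + c - 1 = n + c by ring, div_sub_div _ _ h₁.ne' h₂]
  ring

theorem hasSum_prod_of_nonneg {β γ : Type*} {f : β × γ → ℝ} {g : β → ℝ} {a : ℝ}
    (hf : 0 ≤ f) (hfib : ∀ b, HasSum (fun c ↦ f (b, c)) (g b)) (hg : HasSum g a) : HasSum f a := by
  have hsum : Summable f :=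
    (summable_prod_of_nonneg hf).2 ⟨fun b ↦ (hfib b).summable, by
      simpa only [(hfib _).tsum_eq] using hg.summable⟩
  convert hsum.hasSum
  rw [hsum.tsum_prod' fun b ↦ (hfib b).summable, tsum_congr fun b ↦ (hfib b).tsum_eq,
    hg.tsum_eq]

theorem hasSum_choose_mul_pow_div {α : ℝ} (hα : |1 - α| < 1) {j : ℕ} (hj : 2 ≤ j) :
    HasSum (fun r : ℕ ↦ ((j + r).choose j : ℝ) * α ^ j * (1 - α) ^ r /
      (((j + r : ℕ) : ℝ) * ((j + r : ℕ) - 1))) (α / (j * (j - 1))) := by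
  obtain ⟨a, rfl⟩ := Nat.exists_eq_add_of_le' hj
  have hα0 : α ≠ 0 := by rintro rfl; simp at hα
  have hterm : ∀ r : ℕ, ((a + 2 + r).choose (a + 2) : ℝ) * α ^ (a + 2) * (1 - α) ^ r /
      (((a + 2 + r : ℕ) : ℝ) * ((a + 2 + r : ℕ) - 1)) =
      α ^ (a + 2) / ((a + 2) * (a + 1)) * ((r + a).choose a * (1 - α) ^ r) := fun r ↦ by
    have key : ((r + a + 2).choose (a + 2) : ℝ) * ((a + 2) * (a + 1)) =
        (r + a).choose a * ((r + a + 2) * (r + a + 1)) := by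
      exact_mod_cast Nat.add_two_choose_add_two_mul (r + a) a
    rw [show a + 2 + r = r + a + 2 by ring]
    push_cast
    rw [show (r : ℝ) + a + 2 - 1 = r + a + 1 by ring]
    field_simp
    linear_combination (1 - α) ^ r * key
  have hsum : α ^ (a + 2) / ((a + 2) * (a + 1)) * (1 / (1 - (1 - α)) ^ (a + 1)) =
      α / (((a + 2 : ℕ) : ℝ) * ((a + 2 : ℕ) - 1)) := by
    rw [sub_sub_cancel, pow_succ]
    push_cast
    rw [show (a : ℝ) + 2 - 1 = a + 1 by ring]
    field_simp
  have geom := (hasSum_choose_mul_geometric_of_norm_lt_one a (by rwa [Real.norm_eq_abs])).mul_left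
    (α ^ (a + 2) / ((a + 2) * (a + 1)))
  rw [hsum] at geom
  rw [funext hterm]
  exact geom

section
variable (k : ℕ) (α : ℝ)

noncomputable def weightedBinomialTerm (p : {i : ℕ // k + 1 ≤ i} × ℕ) : ℝ :=
  if p.2 ∈ Finset.Icc k ((p.1 : ℕ) - 1) then
    ((k : ℝ) - 1) / ((((p.1 : ℕ) : ℝ) - 1) * (((p.1 : ℕ) : ℝ) - 2)) *
      (((p.1 : ℕ) - 1).choose p.2 * α ^ p.2 * (1 - α) ^ ((p.1 : ℕ) - 1 - p.2))
  else 0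

def offsetIndex (p : ℕ × ℕ) : {i : ℕ // k + 1 ≤ i} × ℕ :=
  (⟨p.1 + k + p.2 + 1, by omega⟩, p.1 + k)

theorem offsetIndex_injective : Function.Injective (offsetIndex k) := by
  rintro ⟨a, r⟩ ⟨a', r'⟩ h
  simp only [offsetIndex, Prod.mk.injEq, Subtype.mk.injEq] at h
  ext <;> omega

theorem weightedBinomialTerm_eq_zero_of_notMem_range (p : {i : ℕ // k + 1 ≤ i} × ℕ)
    (hp : p ∉ Set.range (offsetIndex k)) :
    weightedBinomialTerm k α p = 0 := by
  obtain ⟨⟨i, hi⟩, j⟩ := p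
  refine if_neg fun hj ↦ hp ⟨(j - k, i - 1 - j), ?_⟩
  rw [Finset.mem_Icc] at hj
  simp only [offsetIndex, Prod.mk.injEq, Subtype.mk.injEq] at hj ⊢
  omega

theorem weightedBinomialTerm_offsetIndex (a r : ℕ) :
    weightedBinomialTerm k α (offsetIndex k (a, r)) = ((k : ℝ) - 1) *
      (((a + k + r).choose (a + k) : ℝ) * α ^ (a + k) * (1 - α) ^ r /
        (((a + k + r : ℕ) : ℝ) * ((a + k + r : ℕ) - 1))) := by
  rw [weightedBinomialTerm, if_pos (by simp [offsetIndex])]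
  simp only [offsetIndex, Nat.add_sub_cancel, Nat.add_sub_cancel_left]
  push_cast
  ring

theorem weightedBinomialTerm_nonneg (hk : 1 ≤ k) (hα0 : 0 ≤ α) (hα1 : α ≤ 1)
    (p : {i : ℕ // k + 1 ≤ i} × ℕ) : 0 ≤ weightedBinomialTerm k α p := by
  obtain ⟨⟨i, hi⟩, j⟩ := p
  unfold weightedBinomialTerm
  split_ifs
  · have hk' : (1 : ℝ) ≤ k := by exact_mod_cast hk
    have hi' : (k : ℝ) + 1 ≤ i := by exact_mod_cast hi
    have : 0 ≤ 1 - α := by linarith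
    exact mul_nonneg (div_nonneg (by linarith) (mul_nonneg (by linarith) (by linarith)))
      (by positivity)
  · exact le_rfl

theorem hasSum_weightedBinomialTerm_fiber (i : {i : ℕ // k + 1 ≤ i}) :
    HasSum (fun j ↦ weightedBinomialTerm k α (i, j))
      ((((k : ℝ) - 1) / ((((i : ℕ) : ℝ) - 1) * (((i : ℕ) : ℝ) - 2))) *
        ∑ j ∈ Finset.Icc k ((i : ℕ) - 1),
          (((i : ℕ) - 1).choose j : ℝ) * α ^ j * (1 - α) ^ ((i : ℕ) - 1 - j)) := by
  have h := hasSum_sum_of_ne_finset_zero (L := SummationFilter.unconditional ℕ)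
    (s := Finset.Icc k ((i : ℕ) - 1)) (f := fun j ↦ weightedBinomialTerm k α (i, j))
    fun j hj ↦ if_neg hj
  rw [Finset.sum_congr rfl fun j hj ↦ by rw [weightedBinomialTerm, if_pos hj]] at h
  rwa [Finset.mul_sum]

theorem hasSum_weightedBinomialTerm (hk : 2 ≤ k) (hα0 : 0 < α) (hα1 : α ≤ 1) :
    HasSum (weightedBinomialTerm k α) α := by
  have hinner (a : ℕ) : HasSum (fun r ↦ weightedBinomialTerm k α (offsetIndex k (a, r)))
      (((k : ℝ) - 1) * (α / (((a + k : ℕ) : ℝ) * ((a + k : ℕ) - 1)))) := by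
    simp only [weightedBinomialTerm_offsetIndex]
    exact (hasSum_choose_mul_pow_div (abs_lt.2 ⟨by linarith, by linarith⟩) (by omega)).mul_left _
  have houter : HasSum
      (fun a : ℕ ↦ ((k : ℝ) - 1) * (α / (((a + k : ℕ) : ℝ) * ((a + k : ℕ) - 1)))) α := by
    have hk' : (1 : ℝ) < k := by exact_mod_cast hk
    have h := (hasSum_one_div_add_mul_add_sub_one hk').mul_left (((k : ℝ) - 1) * α)
    rw [show ((k : ℝ) - 1) * α * (1 / (k - 1)) = α by field_simp [(sub_pos.2 hk').ne']] at h
    exact h.congr_fun fun a ↦ by push_cast; ring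
  have hprod := hasSum_prod_of_nonneg
    (fun p ↦ weightedBinomialTerm_nonneg k α (by omega) hα0.le hα1 _) hinner houter
  exact ((offsetIndex_injective k).hasSum_iff
    (weightedBinomialTerm_eq_zero_of_notMem_range k α)).1 hprod

end

/-- Lemma 4, last assertion: with `ρ*_{k,i} = (k-1)/((i-1)(i-2))` and
`f_{k,i}(α) = Σ_{j=k}^{i-1} C(i-1,j) α^j (1-α)^{i-1-j}`, for every `α ∈ [0,1]`,
`Σ_{i=k+1}^∞ ρ*_{k,i} f_{k,i}(α) = α` (the series converges with sum `α`). -/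
theorem stmt_7 (k : ℕ) (hk : 2 ≤ k) (α : ℝ) (hα0 : 0 ≤ α) (hα1 : α ≤ 1) :
    HasSum (fun i : {i : ℕ // k + 1 ≤ i} =>
      (((k : ℝ) - 1) / ((((i : ℕ) : ℝ) - 1) * (((i : ℕ) : ℝ) - 2))) *
        ∑ j ∈ Finset.Icc k ((i : ℕ) - 1),
          (((i : ℕ) - 1).choose j : ℝ) * α ^ j * (1 - α) ^ ((i : ℕ) - 1 - j)) α := by
  rcases hα0.eq_or_lt with rfl | hα
  · refine hasSum_zero.congr_fun fun i ↦ ?_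
    rw [Finset.sum_eq_zero fun j hj ↦ ?_, mul_zero]
    rw [zero_pow (by grind), mul_zero, zero_mul]
  exact (hasSum_weightedBinomialTerm k α hk hα hα1).prod_fiberwise
    (hasSum_weightedBinomialTerm_fiber k α)
end

section
/- Fix integers k ≥ 2 and b ≥ k+1. For integers i with k+1 ≤ i ≤ b define ρ*_{k,i} = (k−1)/((i−1)(i−2)), and for α ∈ [0,1] define f_{k,i}(α) = Σ_{j=k}^{i−1} binom(i−1, j) α^j (1−α)^{i−1−j}. Then for every real α with 0 < α ≤ 1, Σ_{i=k+1}^b ρ*_{k,i} f_{k,i}(α) < α. -/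
/-!
Write `T n k = ∑_{j=k}^n C(n,j) α^j (1-α)^(n-j)` for the binomial tail, so that the inner sum is
`T (i-1) k`. Pascal's rule gives `T (n+1) (k+1) = T n (k+1) + C(n,k) α^(k+1) (1-α)^(n-k)`, and
together with `(k-1) C(b-1,k-1) = (b-1) C(b-2,k-2)` this makes the sum telescope to
`α T (b-2) (k-1) - (k-1)/(b-1) T (b-1) k`. For `0 < α ≤ 1` the first tail is at most `1` and the
second is positive.
-/

open Finset

lemma Finset.sum_Icc_add_one_add_one {M : Type*} [AddCommMonoid M] (g : ℕ → M) (a b : ℕ) :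
    ∑ j ∈ Icc (a + 1) (b + 1), g j = ∑ j ∈ Icc a b, g (j + 1) := by
  rw [← map_add_right_Icc, sum_map]
  rfl

noncomputable def binomTail (α : ℝ) (n k : ℕ) : ℝ :=
  ∑ j ∈ Icc k n, (n.choose j : ℝ) * α ^ j * (1 - α) ^ (n - j)

namespace binomTail

variable (α : ℝ)

lemma eq_sum_Icc_succ (n k : ℕ) :
    binomTail α n k = ∑ j ∈ Icc k (n + 1), (n.choose j : ℝ) * α ^ j * (1 - α) ^ (n - j) := by
  refine sum_subset (Icc_subset_Icc_right n.le_succ) fun j hj hjn => ?_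
  have hnj : n < j := by simp only [mem_Icc] at hj hjn; omega
  simp [Nat.choose_eq_zero_of_lt hnj]

lemma succ_succ (n k : ℕ) :
    binomTail α (n + 1) (k + 1) = α * binomTail α n k + (1 - α) * binomTail α n (k + 1) := by
  have hpascal : binomTail α (n + 1) (k + 1) = ∑ j ∈ Icc k n,
      ((n.choose j : ℝ) * α ^ (j + 1) * (1 - α) ^ (n - j) +
        (n.choose (j + 1) : ℝ) * α ^ (j + 1) * (1 - α) ^ (n - j)) := by
    rw [binomTail, sum_Icc_add_one_add_one]
    refine sum_congr rfl fun j _ => ?_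
    rw [Nat.choose_succ_succ', Nat.add_sub_add_right]
    push_cast
    ring
  have hshift : ∑ j ∈ Icc k n, (n.choose (j + 1) : ℝ) * α ^ (j + 1) * (1 - α) ^ (n - j) =
      (1 - α) * binomTail α n (k + 1) := by
    rw [eq_sum_Icc_succ, mul_sum, sum_Icc_add_one_add_one]
    refine sum_congr rfl fun j hj => ?_
    rcases (mem_Icc.1 hj).2.lt_or_eq with hjn | rfl
    · rw [show n - j = n - (j + 1) + 1 by omega, pow_succ]
      ring
    · simp
  rw [hpascal, sum_add_distrib, hshift]
  congr 1
  rw [binomTail, mul_sum]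
  exact sum_congr rfl fun j _ => by ring

lemma eq_add_succ (n k : ℕ) :
    binomTail α n k = n.choose k * α ^ k * (1 - α) ^ (n - k) + binomTail α n (k + 1) := by
  rcases le_or_gt k n with hkn | hnk
  · rw [binomTail, Icc_eq_cons_Ioc hkn, sum_cons, ← Icc_add_one_left_eq_Ioc]
    rfl
  · simp [binomTail, Nat.choose_eq_zero_of_lt hnk, hnk, hnk.trans (Nat.lt_succ_self k)]

lemma succ_succ_eq_add (n k : ℕ) :
    binomTail α (n + 1) (k + 1) =
      binomTail α n (k + 1) + n.choose k * α ^ (k + 1) * (1 - α) ^ (n - k) := by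
  rw [succ_succ, eq_add_succ α n k]
  ring

lemma le_one (hα0 : 0 ≤ α) (hα1 : α ≤ 1) (n k : ℕ) : binomTail α n k ≤ 1 := by
  have hβ : 0 ≤ 1 - α := by linarith
  calc binomTail α n k
      ≤ ∑ j ∈ range (n + 1), (n.choose j : ℝ) * α ^ j * (1 - α) ^ (n - j) :=
        sum_le_sum_of_subset_of_nonneg (fun j hj => by simp only [mem_Icc, mem_range] at hj ⊢; omega)
          fun j _ _ => by positivity
    _ = (α + (1 - α)) ^ n := by
        rw [add_pow]
        exact sum_congr rfl fun j _ => by ring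
    _ = 1 := by simp

lemma pos (hα0 : 0 < α) (hα1 : α ≤ 1) {n k : ℕ} (hkn : k ≤ n) : 0 < binomTail α n k := by
  have hβ : 0 ≤ 1 - α := by linarith
  calc (0 : ℝ) < (n.choose n : ℝ) * α ^ n * (1 - α) ^ (n - n) := by simp; positivity
    _ ≤ binomTail α n k :=
        single_le_sum (f := fun j => (n.choose j : ℝ) * α ^ j * (1 - α) ^ (n - j))
          (fun j _ => by positivity) (mem_Icc.2 ⟨hkn, le_rfl⟩)

end binomTail

theorem sum_Icc_div_mul_binomTail_eq (α : ℝ) {k b : ℕ} (hk : 2 ≤ k) (hkb : k ≤ b) :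
    ∑ i ∈ Icc (k + 1) b, ((k : ℝ) - 1) / (((i : ℝ) - 1) * ((i : ℝ) - 2)) * binomTail α (i - 1) k =
      α * binomTail α (b - 2) (k - 1) - ((k : ℝ) - 1) / ((b : ℝ) - 1) * binomTail α (b - 1) k := by
  obtain ⟨s, rfl⟩ : ∃ s, k = s + 2 := ⟨k - 2, by omega⟩
  induction b, hkb using Nat.le_induction with
  | base => simp [binomTail]
  | succ b hb ih =>
    obtain ⟨m, rfl⟩ : ∃ m, b = m + 2 := ⟨b - 2, by omega⟩
    rw [sum_Icc_succ_top (by omega), ih]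
    simp only [show m + 2 + 1 - 1 = m + 1 + 1 from rfl, show m + 2 + 1 - 2 = m + 1 from rfl,
      show m + 2 - 1 = m + 1 from rfl, show m + 2 - 2 = m from rfl, show s + 2 - 1 = s + 1 from rfl,
      binomTail.succ_succ_eq_add α (m + 1) (s + 1), binomTail.succ_succ_eq_add α m s, Nat.add_sub_add_right]
    have hchoose : ((s : ℝ) + 1) * (m + 1).choose (s + 1) = (m + 1) * m.choose s := by
      exact_mod_cast by rw [Nat.add_one_mul_choose_eq]; ring
    have hincrement : ((s : ℝ) + 1) / (m + 1) * ((m + 1).choose (s + 1) * α ^ (s + 1 + 1) *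
        (1 - α) ^ (m - s)) = α * (m.choose s * α ^ (s + 1) * (1 - α) ^ (m - s)) := by
      field_simp
      linear_combination α ^ (s + 2) * (1 - α) ^ (m - s) * hchoose
    have hcoef : 1 / (((m : ℝ) + 2) * (m + 1)) + 1 / (m + 2) = 1 / (m + 1) := by
      field_simp
      ring
    push_cast
    linear_combination ((s : ℝ) + 1) * (binomTail α (m + 1) (s + 1 + 1) +
      (m + 1).choose (s + 1) * α ^ (s + 1 + 1) * (1 - α) ^ (m - s)) * hcoef + hincrement

/-- Claim (ii) in the proof of Lemma 3: with `ρ*_{k,i} = (k-1)/((i-1)(i-2))` and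
`f_{k,i}(α) = Σ_{j=k}^{i-1} C(i-1,j) α^j (1-α)^{i-1-j}`, for every `α ∈ (0,1]`,
`Σ_{i=k+1}^b ρ*_{k,i} f_{k,i}(α) < α`. -/
theorem stmt_9 (k b : ℕ) (hk : 2 ≤ k) (hb : k + 1 ≤ b)
    (α : ℝ) (hα0 : 0 < α) (hα1 : α ≤ 1) :
    ∑ i ∈ Finset.Icc (k + 1) b,
      (((k : ℝ) - 1) / (((i : ℝ) - 1) * ((i : ℝ) - 2))) *
        ∑ j ∈ Finset.Icc k (i - 1),
          ((i - 1).choose j : ℝ) * α ^ j * (1 - α) ^ (i - 1 - j) < α := by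
  change ∑ i ∈ Icc (k + 1) b, ((k : ℝ) - 1) / (((i : ℝ) - 1) * ((i : ℝ) - 2)) *
    binomTail α (i - 1) k < α
  rw [sum_Icc_div_mul_binomTail_eq α hk (by omega)]
  have hG := binomTail.le_one α hα0.le hα1 (b - 2) (k - 1)
  have hF := binomTail.pos α hα0 hα1 (show k ≤ b - 1 by omega)
  have hc : 0 < ((k : ℝ) - 1) / ((b : ℝ) - 1) := by
    have hk' : (2 : ℝ) ≤ k := by exact_mod_cast hk
    have hb' : (k : ℝ) + 1 ≤ b := by exact_mod_cast hb
    exact div_pos (by linarith) (by linarith)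
  linarith [mul_le_of_le_one_right hα0.le hG, mul_pos hc hF]
end

section
/- Let k ≥ 2 be an integer, C > 0 a real constant, and let F : [0,1] → [0,1] be a continuous nondecreasing function such that F(α) < α for every α ∈ (0,1] and F(α) ≤ C·α^k for every α ∈ [0,1]. Define the sequence α_0 = 1 and α_{t+1} = F(α_t) for t ≥ 0. Then for every real γ with 1 < γ < k there exists a constant A > 0 such that α_t ≤ exp(−A·γ^t) for all integers t ≥ 1. -/
/-!
Since `F x ≤ x` the orbit decreases, and by continuity its limit is a fixed point of `F`,
hence `0`. Once `α_t` is so small that `C α_t^(k-γ) ≤ 1`, we get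
`α_{t+1} ≤ C α_t^k ≤ α_t^γ`, so from then on the orbit decays doubly exponentially at rate `γ`;
the finitely many earlier terms are at most `α_1 < 1` and are absorbed into the constant.
-/

open Filter Topology Set Real

lemma map_le_self_of_le_mul_pow {F : ℝ → ℝ} {C : ℝ} {k : ℕ} (hk : k ≠ 0)
    (hlt : ∀ x ∈ Ioc (0 : ℝ) 1, F x < x) (hbound : ∀ x ∈ Icc (0 : ℝ) 1, F x ≤ C * x ^ k) :
    ∀ x ∈ Icc (0 : ℝ) 1, F x ≤ x := by
  rintro x ⟨hx0, hx1⟩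
  rcases hx0.eq_or_lt with rfl | hx
  · simpa [zero_pow hk] using hbound 0 ⟨le_rfl, zero_le_one⟩
  · exact (hlt x ⟨hx, hx1⟩).le

lemma mem_of_mapsTo_of_recurrence {F : ℝ → ℝ} {α : ℕ → ℝ} {s : Set ℝ} (hmaps : MapsTo F s s)
    (hα0 : α 0 ∈ s) (hrec : ∀ t, α (t + 1) = F (α t)) : ∀ t, α t ∈ s
  | 0 => hα0
  | t + 1 => hrec t ▸ hmaps (mem_of_mapsTo_of_recurrence hmaps hα0 hrec t)

lemma tendsto_zero_of_recurrence_of_lt_self {F : ℝ → ℝ} {α : ℕ → ℝ}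
    (hcont : ContinuousOn F (Icc 0 1)) (hlt : ∀ x ∈ Ioc (0 : ℝ) 1, F x < x)
    (hmem : ∀ t, α t ∈ Icc (0 : ℝ) 1) (hanti : Antitone α) (hrec : ∀ t, α (t + 1) = F (α t)) :
    Tendsto α atTop (𝓝 0) := by
  have hlim : Tendsto α atTop (𝓝 (⨅ t, α t)) :=
    tendsto_atTop_ciInf hanti ⟨0, forall_mem_range.2 fun t => (hmem t).1⟩
  set L := ⨅ t, α t
  have hL : L ∈ Icc (0 : ℝ) 1 := isClosed_Icc.mem_of_tendsto hlim (Eventually.of_forall hmem)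
  have hfixed : F L = L := by
    have hF : Tendsto (fun t => F (α t)) atTop (𝓝 (F L)) :=
      (hcont L hL).tendsto.comp (tendsto_nhdsWithin_iff.2 ⟨hlim, Eventually.of_forall hmem⟩)
    refine tendsto_nhds_unique hF ?_
    simpa only [Function.comp_def, hrec] using hlim.comp (tendsto_add_atTop_nat 1)
  rcases hL.1.eq_or_lt with hL0 | hLpos
  · rwa [hL0]
  · exact absurd hfixed (hlt L ⟨hLpos, hL.2⟩).ne

lemma mul_pow_le_rpow {C x γ : ℝ} {k : ℕ} (hx : 0 ≤ x) (hk : (k : ℝ) ≠ 0)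
    (hsmall : C * x ^ ((k : ℝ) - γ) ≤ 1) : C * x ^ k ≤ x ^ γ := by
  have hsplit : x ^ k = x ^ ((k : ℝ) - γ) * x ^ γ := by
    rw [← rpow_natCast, ← rpow_add' hx (by simpa using hk), sub_add_cancel]
  calc C * x ^ k = (C * x ^ ((k : ℝ) - γ)) * x ^ γ := by rw [hsplit, mul_assoc]
    _ ≤ 1 * x ^ γ := by gcongr
    _ = x ^ γ := one_mul _

lemma le_exp_neg_mul_pow_of_le_rpow {β : ℕ → ℝ} {b γ : ℝ} (hγ : 0 ≤ γ) (hβ : ∀ s, 0 ≤ β s)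
    (h0 : β 0 ≤ exp (-b)) (hstep : ∀ s, β (s + 1) ≤ β s ^ γ) :
    ∀ s, β s ≤ exp (-b * γ ^ s)
  | 0 => by simpa using h0
  | s + 1 =>
    calc β (s + 1) ≤ β s ^ γ := hstep s
      _ ≤ exp (-b * γ ^ s) ^ γ :=
        rpow_le_rpow (hβ s) (le_exp_neg_mul_pow_of_le_rpow hγ hβ h0 hstep s) hγ
      _ = exp (-b * γ ^ (s + 1)) := by rw [← exp_mul, pow_succ, mul_assoc]

lemma le_exp_neg_div_mul_pow_of_tail {α : ℕ → ℝ} {b γ : ℝ} (T : ℕ) (hγ : 1 ≤ γ)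
    (hb : 0 ≤ b) (hα : ∀ t, 1 ≤ t → α t ≤ exp (-b))
    (hT : ∀ s, α (T + s) ≤ exp (-b * γ ^ s)) :
    ∀ t, 1 ≤ t → α t ≤ exp (-(b / γ ^ T) * γ ^ t) := by
  have hγT : 0 < γ ^ T := pow_pos (by linarith) T
  intro t ht
  rcases le_or_gt T t with hTt | htT
  · obtain ⟨s, rfl⟩ := Nat.exists_eq_add_of_le hTt
    convert hT s using 2
    rw [pow_add]
    field_simp
  · refine (hα t ht).trans (exp_le_exp.2 ?_)
    have hpow : γ ^ t ≤ γ ^ T := pow_le_pow_right₀ hγ htT.le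
    have : b / γ ^ T * γ ^ t ≤ b := by
      rw [div_mul_eq_mul_div, div_le_iff₀ hγT]
      exact mul_le_mul_of_nonneg_left hpow hb
    linarith

theorem stmt_11_general (k : ℕ) (C : ℝ)
    (F : ℝ → ℝ) (hmaps : ∀ x ∈ Set.Icc (0 : ℝ) 1, F x ∈ Set.Icc (0 : ℝ) 1)
    (hcont : ContinuousOn F (Set.Icc 0 1))
    (hlt : ∀ x ∈ Set.Ioc (0 : ℝ) 1, F x < x)
    (hbound : ∀ x ∈ Set.Icc (0 : ℝ) 1, F x ≤ C * x ^ k)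
    (α : ℕ → ℝ) (hα0 : α 0 = 1) (hrec : ∀ t, α (t + 1) = F (α t))
    (γ : ℝ) (hγ1 : 1 < γ) (hγk : γ < k) :
    ∃ A : ℝ, 0 < A ∧ ∀ t : ℕ, 1 ≤ t → α t ≤ Real.exp (-A * γ ^ t) := by
  have hk : (k : ℝ) ≠ 0 := ne_of_gt (by linarith)
  have hmem := mem_of_mapsTo_of_recurrence hmaps (by simp [hα0]) hrec
  have hFle := map_le_self_of_le_mul_pow (by exact_mod_cast hk) hlt hbound
  have hanti : Antitone α := antitone_nat_of_succ_le fun t => hrec t ▸ hFle _ (hmem t)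
  have hsmall : Tendsto (fun t => C * α t ^ ((k : ℝ) - γ)) atTop (𝓝 0) := by
    simpa [zero_rpow (sub_pos.2 hγk).ne'] using
      ((tendsto_zero_of_recurrence_of_lt_self hcont hlt hmem hanti hrec).rpow_const
        (Or.inr (sub_pos.2 hγk).le)).const_mul C
  obtain ⟨T, hT⟩ := eventually_atTop.1
    ((eventually_ge_atTop 1).and (hsmall.eventually_lt_const zero_lt_one))
  -- `α 1` may vanish, so `b` is taken with `α 1 = 1 - b ≤ exp (-b)` rather than as `-log (α 1)`.
  set b := 1 - α 1
  have hb : 0 < b := sub_pos.2 (by simpa [hrec 0, hα0] using hlt 1 (right_mem_Ioc.2 one_pos))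
  have hαb : ∀ t, 1 ≤ t → α t ≤ exp (-b) :=
    fun t ht => (hanti ht).trans (by linarith [add_one_le_exp (-b)])
  refine ⟨b / γ ^ T, by positivity, le_exp_neg_div_mul_pow_of_tail T hγ1.le hb.le hαb ?_⟩
  refine le_exp_neg_mul_pow_of_le_rpow (by linarith) (fun s => (hmem _).1)
    (hαb T (hT T le_rfl).1) fun s => ?_
  rw [← add_assoc, hrec]
  exact (hbound _ (hmem _)).trans
    (mul_pow_le_rpow (hmem _).1 hk (hT _ (Nat.le_add_right T s)).2.le)

/-- Scalar recursion lemma (the "standard calculus" step in the proof of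
Lemma 3): if `F : [0,1] → [0,1]` is continuous, nondecreasing, satisfies
`F(α) < α` on `(0,1]` and `F(α) ≤ C α^k` on `[0,1]`, then the sequence
`α_0 = 1`, `α_{t+1} = F(α_t)` satisfies `α_t ≤ exp(-A γ^t)` for some `A > 0`,
for any `1 < γ < k`. -/
theorem stmt_11 (k : ℕ) (hk : 2 ≤ k) (C : ℝ) (hC : 0 < C)
    (F : ℝ → ℝ) (hmaps : ∀ x ∈ Set.Icc (0 : ℝ) 1, F x ∈ Set.Icc (0 : ℝ) 1)
    (hcont : ContinuousOn F (Set.Icc 0 1))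
    (hmono : MonotoneOn F (Set.Icc 0 1))
    (hlt : ∀ x ∈ Set.Ioc (0 : ℝ) 1, F x < x)
    (hbound : ∀ x ∈ Set.Icc (0 : ℝ) 1, F x ≤ C * x ^ k)
    (α : ℕ → ℝ) (hα0 : α 0 = 1) (hrec : ∀ t, α (t + 1) = F (α t))
    (γ : ℝ) (hγ1 : 1 < γ) (hγk : γ < k) :
    ∃ A : ℝ, 0 < A ∧ ∀ t : ℕ, 1 ≤ t → α t ≤ Real.exp (-A * γ ^ t) :=
  stmt_11_general k C F hmaps hcont hlt hbound α hα0 hrec γ hγ1 hγk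
end

section
/- Let q ≥ 2 be a prime power and let s, ℓ, m be integers with 0 ≤ s ≤ min(ℓ, m). Let A(s, ℓ, m) denote the number of ℓ × m matrices with entries in 𝔽_q whose rank equals s. Then A(s, ℓ, m) ≥ q^{ℓm − (ℓ−s)(m−s)} · (1 − s·q^{s−m}). -/
/-!
Every matrix `[C; X C]`, with `C` an `s × m` matrix of independent rows and `X` an arbitrary
`(ℓ - s) × s` matrix, has rank `s`, and it determines `C` and `X`. Hence
`A(s, ℓ, m) ≥ q^((ℓ-s)s) ∏_{i<s} (q^m - q^i)`. Writing each factor as `q^m (1 - q^(i-m))`,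
the Weierstrass product inequality `∏ (1 - aᵢ) ≥ 1 - ∑ aᵢ` together with `q^(i-m) ≤ q^(s-m)`
gives the bound.
-/

open Finset Matrix

namespace Matrix

variable {K : Type*} [Field K] {m₁ m₂ n : Type*}

theorem rank_fromRows_self_mul [Fintype m₁] [Fintype m₂] [Fintype n] [DecidableEq m₁]
    (C : Matrix m₁ n K) (X : Matrix m₂ m₁ K) :
    (fromRows C (X * C)).rank = C.rank := by
  have hfactor : fromRows C (X * C) = fromRows 1 X * C := by
    rw [fromRows_mul, Matrix.one_mul]
  have hrecover : (fromCols 1 0 : Matrix m₁ (m₁ ⊕ m₂) K) * fromRows C (X * C) = C := by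
    rw [fromCols_mul_fromRows, Matrix.one_mul, Matrix.zero_mul, add_zero]
  refine le_antisymm ?_ ?_
  · rw [hfactor]
    exact rank_mul_le_right _ _
  · conv_lhs => rw [← hrecover]
    exact rank_mul_le_right _ _

theorem mul_left_injective_of_linearIndependent_row [Fintype m₁] {C : Matrix m₁ n K}
    (hC : LinearIndependent K C.row) :
    Function.Injective fun X : Matrix m₂ m₁ K => X * C := by
  intro X Y hXY
  funext i
  exact vecMul_injective_iff.mpr hC (congrFun hXY i)

theorem card_mul_card_linearIndependent_le_card_rank_eq [Finite K] [Fintype m₂] [Fintype n]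
    (s : ℕ) :
    Nat.card (Matrix m₂ (Fin s) K) * Nat.card {C : Fin s → n → K // LinearIndependent K C} ≤
      Nat.card {M : Matrix (Fin s ⊕ m₂) n K // M.rank = s} := by
  rw [← Nat.card_prod]
  refine Nat.card_le_card_of_injective
    (fun p => ⟨fromRows (of p.2.1) (p.1 * of p.2.1), ?_⟩) ?_
  · rw [rank_fromRows_self_mul, LinearIndependent.rank_matrix (M := of p.2.1) p.2.2,
      Fintype.card_fin]
  · rintro ⟨X, C, hC⟩ ⟨Y, D, hD⟩ h
    obtain ⟨hCD, hXY⟩ := fromRows_inj (congrArg Subtype.val h)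
    obtain rfl : C = D := hCD
    obtain rfl : X = Y := mul_left_injective_of_linearIndependent_row hC hXY
    rfl

theorem pow_mul_prod_le_card_rank_eq [Fintype K] {s l m : ℕ} (hsl : s ≤ l) (hsm : s ≤ m) :
    Fintype.card K ^ ((l - s) * s) *
        ∏ i : Fin s, (Fintype.card K ^ m - Fintype.card K ^ (i : ℕ)) ≤
      Nat.card {M : Matrix (Fin l) (Fin m) K // M.rank = s} := by
  let rows : Fin s ⊕ Fin (l - s) ≃ Fin l :=
    finSumFinEquiv.trans (finCongr (Nat.add_sub_cancel' hsl))
  rw [← Nat.card_congr ((reindex rows (Equiv.refl _)).subtypeEquiv fun M => by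
    rw [rank_reindex])]
  convert card_mul_card_linearIndependent_le_card_rank_eq (K := K) (m₂ := Fin (l - s))
    (n := Fin m) s using 2
  · simp [Matrix, ← pow_mul, mul_comm]
  · rw [card_linearIndependent (by simpa using hsm)]
    simp

end Matrix

theorem one_sub_sum_le_prod_one_sub {ι R : Type*} [LinearOrder ι] [CommRing R] [PartialOrder R]
    [IsOrderedRing R] (s : Finset ι) (a : ι → R) (h0 : ∀ i ∈ s, 0 ≤ a i)
    (h1 : ∀ i ∈ s, a i ≤ 1) :
    1 - ∑ i ∈ s, a i ≤ ∏ i ∈ s, (1 - a i) := by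
  rw [prod_one_sub_ordered]
  gcongr with i hi
  refine mul_le_of_le_one_right (h0 i hi) (prod_le_one (fun j hj => ?_) fun j hj => ?_)
  · exact sub_nonneg.mpr (h1 j (mem_filter.mp hj).1)
  · exact sub_le_self _ (h0 j (mem_filter.mp hj).1)

theorem pow_mul_one_sub_le_prod_pow_sub_pow {q : ℝ} (hq : 1 ≤ q) {s m : ℕ} (hsm : s ≤ m) :
    q ^ (s * m) * (1 - s * q ^ ((s : ℤ) - m)) ≤ ∏ i ∈ range s, (q ^ m - q ^ i) := by
  have hq0 : q ≠ 0 := by positivity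
  have hfactor : ∀ i : ℕ, q ^ m - q ^ i = q ^ m * (1 - q ^ ((i : ℤ) - m)) := fun i => by
    rw [mul_sub, mul_one, zpow_sub₀ hq0, zpow_natCast, zpow_natCast,
      mul_div_cancel₀ _ (by positivity)]
  have hsum : ∑ i ∈ range s, q ^ ((i : ℤ) - m) ≤ s * q ^ ((s : ℤ) - m) := by
    simpa using sum_le_card_nsmul (range s) _ _ fun i hi =>
      zpow_le_zpow_right₀ hq (by have := mem_range.mp hi; omega)
  rw [prod_congr rfl fun i _ => hfactor i, prod_mul_distrib, prod_const, card_range, ← pow_mul,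
    mul_comm m s]
  gcongr
  refine le_trans (by linarith) (one_sub_sum_le_prod_one_sub _ _ (fun i _ => by positivity)
    fun i hi => zpow_le_one_of_nonpos₀ hq (by have := mem_range.mp hi; omega))

theorem stmt_13_general (q s l m : ℕ)
    (F : Type) [Field F] [Fintype F] (hq : Fintype.card F = q)
    (hsl : s ≤ l) (hsm : s ≤ m) :
    (q : ℝ) ^ ((l : ℤ) * m - ((l : ℤ) - s) * ((m : ℤ) - s)) *
        (1 - (s : ℝ) * (q : ℝ) ^ ((s : ℤ) - m)) ≤
      (Nat.card {M : Matrix (Fin l) (Fin m) F // M.rank = s} : ℝ) := by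
  have hq1 : 1 ≤ q := hq ▸ Fintype.card_pos
  have hcount : q ^ ((l - s) * s) * ∏ i ∈ range s, (q ^ m - q ^ i) ≤
      Nat.card {M : Matrix (Fin l) (Fin m) F // M.rank = s} := by
    rw [← hq, ← Fin.prod_univ_eq_prod_range (fun i => Fintype.card F ^ m - Fintype.card F ^ i)]
    exact pow_mul_prod_le_card_rank_eq hsl hsm
  have hcast : ∏ i ∈ range s, ((q : ℝ) ^ m - (q : ℝ) ^ i) =
      ((∏ i ∈ range s, (q ^ m - q ^ i) : ℕ) : ℝ) := by
    rw [Nat.cast_prod]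
    refine prod_congr rfl fun i hi => ?_
    rw [Nat.cast_sub (Nat.pow_le_pow_right hq1 (by have := mem_range.mp hi; omega)),
      Nat.cast_pow, Nat.cast_pow]
  have hexp : (q : ℝ) ^ ((l : ℤ) * m - ((l : ℤ) - s) * ((m : ℤ) - s)) =
      (q : ℝ) ^ ((l - s) * s) * (q : ℝ) ^ (s * m) := by
    rw [← pow_add, ← zpow_natCast]
    push_cast [Nat.cast_sub hsl]
    ring_nf
  rw [hexp, mul_assoc]
  calc _ ≤ (q : ℝ) ^ ((l - s) * s) * ∏ i ∈ range s, ((q : ℝ) ^ m - (q : ℝ) ^ i) := by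
        gcongr
        exact pow_mul_one_sub_le_prod_pow_sub_pow (by exact_mod_cast hq1) hsm
    _ ≤ _ := by
        rw [hcast]
        exact_mod_cast hcount

/-- Lower bound on the number `A(s,ℓ,m)` of `ℓ × m` matrices over `𝔽_q` of rank `s`:
`A(s,ℓ,m) ≥ q^(ℓm - (ℓ-s)(m-s)) (1 - s q^(s-m))`. -/
theorem stmt_13 (q s l m : ℕ) (hq2 : 2 ≤ q)
    (F : Type) [Field F] [Fintype F] (hq : Fintype.card F = q)
    (hsl : s ≤ l) (hsm : s ≤ m) :
    (q : ℝ) ^ ((l : ℤ) * m - ((l : ℤ) - s) * ((m : ℤ) - s)) *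
        (1 - (s : ℝ) * (q : ℝ) ^ ((s : ℤ) - m)) ≤
      (Nat.card {M : Matrix (Fin l) (Fin m) F // M.rank = s} : ℝ) :=
  stmt_13_general q s l m F hq hsl hsm
end

section
/- Let q ≥ 2 be a prime power and let s, ℓ, m be integers with 0 ≤ s ≤ min(ℓ, m). Let A(s, ℓ, m) denote the number of ℓ × m matrices with entries in 𝔽_q whose rank equals s. Then A(s, ℓ, m) ≤ binom(ℓ, s) · q^{ℓm − (ℓ−s)(m−s)}; in particular A(s, ℓ, m) ≤ 2^ℓ · q^{ℓm − (ℓ−s)(m−s)}. -/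
/-! A matrix of rank `s` has `s` rows spanning its row space. Given the set `T` of those rows,
the matrix is determined by them (`q ^ (s m)` choices) and by the coefficients expressing each
of the other `ℓ - s` rows through them (`q ^ (s (ℓ - s))` choices). Summing over the
`binom(ℓ, s)` sets `T` gives the bound, since `s m + (ℓ - s) s = ℓ m - (ℓ - s)(m - s)`. -/

open Finset Submodule

theorem exists_finset_card_eq_finrank_span_forall_mem_span
    {ι K V : Type*} [Finite ι] [Field K] [AddCommGroup V] [Module K V] (v : ι → V) :
    ∃ T : Finset ι, #T = Module.finrank K (span K (Set.range v)) ∧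
      ∀ i, v i ∈ span K (v '' T) := by
  classical
  have := Fintype.ofFinite ι
  obtain ⟨b, -, -, hspan, hli⟩ :=
    exists_linearIndepOn_extension (linearIndepOn_empty K v) (Set.empty_subset Set.univ)
  have hmem (i : ι) : v i ∈ span K (v '' b) := hspan ⟨i, trivial, rfl⟩
  have hspan_eq : span K (Set.range v) = span K (v '' b) :=
    le_antisymm (span_le.2 (Set.range_subset_iff.2 hmem)) (span_mono (Set.image_subset_range v b))
  refine ⟨b.toFinset, ?_, by simpa using hmem⟩
  rw [hspan_eq, Set.image_eq_range, finrank_span_eq_card hli, Set.toFinset_card]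

theorem Matrix.exists_finset_card_eq_rank_forall_row_mem_span
    {ι n K : Type*} [Finite ι] [Fintype n] [Field K] (M : Matrix ι n K) :
    ∃ T : Finset ι, #T = M.rank ∧ ∀ i, M i ∈ span K (M.row '' T) := by
  rw [M.rank_eq_finrank_span_row]
  exact exists_finset_card_eq_finrank_span_forall_mem_span M.row

theorem Matrix.card_forall_row_mem_span_le
    {ι n K : Type*} [Fintype ι] [Fintype n] [Semiring K] [Fintype K] (T : Finset ι) :
    Nat.card {M : Matrix ι n K // ∀ i, M i ∈ span K (M.row '' T)} ≤
      Fintype.card K ^ (#T * Fintype.card n + (Fintype.card ι - #T) * #T) := by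
  classical
  let assemble : (T → n → K) × ({i // i ∉ T} → T → K) → Matrix ι n K := fun RC =>
    fun i => if h : i ∈ T then RC.1 ⟨i, h⟩ else ∑ t, RC.2 ⟨i, h⟩ t • RC.1 t
  have hrange : {M : Matrix ι n K | ∀ i, M i ∈ span K (M.row '' T)} ⊆ Set.range assemble := by
    intro M hM
    have hcoeff (i : ι) : ∃ c : T → K, ∑ t, c t • M t = M i := by
      have := hM i
      rwa [Set.image_eq_range, mem_span_range_iff_exists_fun] at this
    choose c hc using hcoeff
    refine ⟨(fun t => M t, fun i => c i), ?_⟩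
    funext i
    by_cases h : i ∈ T
    · simp [assemble, h]
    · simpa [assemble, h] using hc i
  calc Nat.card {M : Matrix ι n K // ∀ i, M i ∈ span K (M.row '' T)}
      ≤ Nat.card (Set.range assemble) := Nat.card_mono (Set.toFinite _) hrange
    _ ≤ Nat.card ((T → n → K) × ({i // i ∉ T} → T → K)) := Finite.card_range_le assemble
    _ = Fintype.card K ^ (#T * Fintype.card n + (Fintype.card ι - #T) * #T) := by
      rw [Nat.card_eq_fintype_card]
      simp only [Fintype.card_prod, Fintype.card_fun, Fintype.card_coe,
        Fintype.card_subtype_compl, ← pow_mul, ← pow_add]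
      ring

theorem Matrix.card_rank_eq_le {ι n K : Type*} [Fintype ι] [Fintype n] [Field K] [Fintype K]
    (s : ℕ) :
    Nat.card {M : Matrix ι n K // M.rank = s} ≤
      (Fintype.card ι).choose s *
        Fintype.card K ^ (s * Fintype.card n + (Fintype.card ι - s) * s) := by
  classical
  have hcover : univ.filter (fun M : Matrix ι n K => M.rank = s) ⊆
      (powersetCard s univ).biUnion fun T : Finset ι =>
        univ.filter fun M : Matrix ι n K => ∀ i, M i ∈ span K (M.row '' T) := by
    intro M hM
    obtain ⟨T, hT, hrows⟩ := M.exists_finset_card_eq_rank_forall_row_mem_span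
    simp only [mem_filter, mem_univ, true_and] at hM
    simpa [mem_biUnion, hT, hM] using ⟨T, hT.trans hM, hrows⟩
  have hpiece (T : Finset ι) (hT : T ∈ powersetCard s univ) :
      #(univ.filter fun M : Matrix ι n K => ∀ i, M i ∈ span K (M.row '' T)) ≤
        Fintype.card K ^ (s * Fintype.card n + (Fintype.card ι - s) * s) := by
    rw [← (mem_powersetCard.1 hT).2, ← Fintype.card_subtype, ← Nat.card_eq_fintype_card]
    exact Matrix.card_forall_row_mem_span_le T
  calc Nat.card {M : Matrix ι n K // M.rank = s}
      = #(univ.filter fun M : Matrix ι n K => M.rank = s) := by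
        rw [Nat.card_eq_fintype_card, Fintype.card_subtype]
    _ ≤ #(powersetCard s (univ : Finset ι)) *
          Fintype.card K ^ (s * Fintype.card n + (Fintype.card ι - s) * s) :=
        (card_le_card hcover).trans (card_biUnion_le_card_mul _ _ _ hpiece)
    _ = _ := by rw [card_powersetCard, card_univ]

theorem stmt_14_general (q s l m : ℕ)
    (F : Type) [Field F] [Fintype F] (hq : Fintype.card F = q)
    (hsl : s ≤ l) :
    (Nat.card {M : Matrix (Fin l) (Fin m) F // M.rank = s} : ℝ) ≤
        (l.choose s : ℝ) * (q : ℝ) ^ ((l : ℤ) * m - ((l : ℤ) - s) * ((m : ℤ) - s)) ∧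
      (Nat.card {M : Matrix (Fin l) (Fin m) F // M.rank = s} : ℝ) ≤
        2 ^ l * (q : ℝ) ^ ((l : ℤ) * m - ((l : ℤ) - s) * ((m : ℤ) - s)) := by
  have hcount := Matrix.card_rank_eq_le (ι := Fin l) (n := Fin m) (K := F) s
  rw [Fintype.card_fin, Fintype.card_fin, hq] at hcount
  have hexp : (l : ℤ) * m - ((l : ℤ) - s) * ((m : ℤ) - s) = ((s * m + (l - s) * s : ℕ) : ℤ) := by
    push_cast [Nat.cast_sub hsl]
    ring
  have hchoose : (Nat.card {M : Matrix (Fin l) (Fin m) F // M.rank = s} : ℝ) ≤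
      (l.choose s : ℝ) * (q : ℝ) ^ ((l : ℤ) * m - ((l : ℤ) - s) * ((m : ℤ) - s)) := by
    rw [hexp, zpow_natCast]
    exact_mod_cast hcount
  refine ⟨hchoose, hchoose.trans ?_⟩
  gcongr
  exact_mod_cast l.choose_le_two_pow s

/-- Upper bound on the number `A(s,ℓ,m)` of `ℓ × m` matrices over `𝔽_q` of rank `s`:
`A(s,ℓ,m) ≤ C(ℓ,s) q^(ℓm - (ℓ-s)(m-s))`, and in particular
`A(s,ℓ,m) ≤ 2^ℓ q^(ℓm - (ℓ-s)(m-s))`. -/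
theorem stmt_14 (q s l m : ℕ) (hq2 : 2 ≤ q)
    (F : Type) [Field F] [Fintype F] (hq : Fintype.card F = q)
    (hsl : s ≤ l) (hsm : s ≤ m) :
    (Nat.card {M : Matrix (Fin l) (Fin m) F // M.rank = s} : ℝ) ≤
        (l.choose s : ℝ) * (q : ℝ) ^ ((l : ℤ) * m - ((l : ℤ) - s) * ((m : ℤ) - s)) ∧
      (Nat.card {M : Matrix (Fin l) (Fin m) F // M.rank = s} : ℝ) ≤
        2 ^ l * (q : ℝ) ^ ((l : ℤ) * m - ((l : ℤ) - s) * ((m : ℤ) - s)) :=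
  stmt_14_general q s l m F hq hsl
end

section
/- Let q ≥ 2 be a prime power and let λ, ω ∈ (0,1) be real numbers with λω < 1 − λ. For each integer N ≥ 1 set ℓ_N = ⌈λN⌉, m_N = N − ℓ_N, and s_N = ⌈ω·ℓ_N⌉, and let A_N denote the number of ℓ_N × m_N matrices with entries in 𝔽_q whose rank equals s_N (this is well defined, i.e. s_N ≤ min(ℓ_N, m_N), for all sufficiently large N). Then lim_{N→∞} log_q(A_N) / (N·ℓ_N) = ω − λω². -/
/-!
A rank-`s` matrix `M ∈ 𝔽_q^{l×m}` factors as `M = B C` with `B` of full column rank, and then the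
pairs `(B G, G⁻¹ C)`, `G ∈ GL_s(𝔽_q)`, are distinct factorizations; conversely, full-rank
`B ∈ 𝔽_q^{l×s}` and arbitrary `X ∈ 𝔽_q^{s×(m-s)}` give distinct rank-`s` matrices `[B | B X]`.
As the number of `k` linearly independent vectors in `𝔽_q^n` lies between `q^{(n-1)k}` and
`q^{nk}`, this gives `|log_q A - s (l + m - s)| ≤ s`. With `l + m = N`, `l ~ λN` and `s ~ λωN`,
dividing by `N l` leaves `λω (1 - λω) / λ = ω - λω²`; the hypothesis `λω < 1 - λ` is what makes
`s ≤ m` for large `N`.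
-/

open Filter Topology

namespace Nat

theorem pow_mul_le_prod_pow_sub_pow_mul_pow {q n k : ℕ} (hq : 2 ≤ q) (hk : k ≤ n) :
    q ^ (n * k) ≤ (∏ i : Fin k, (q ^ n - q ^ (i : ℕ))) * q ^ k := by
  calc q ^ (n * k) = ∏ _i : Fin k, q ^ n := by rw [Fin.prod_const, pow_mul]
    _ ≤ ∏ i : Fin k, (q ^ n - q ^ (i : ℕ)) * q := Finset.prod_le_prod' fun i _ => ?_
    _ = _ := by rw [Finset.prod_mul_distrib, Fin.prod_const]
  have hi : q ^ (i : ℕ) * q ≤ q ^ n := by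
    rw [← pow_succ]; exact Nat.pow_le_pow_right (by omega) (by omega)
  have hn : q ^ n * 2 ≤ q ^ n * q := Nat.mul_le_mul_left _ hq
  rw [Nat.sub_mul]
  omega

end Nat

namespace Real

theorem natCast_sub_le_logb_of_pow_le_mul_pow {q a b x : ℕ} (hq : 1 < q)
    (h : q ^ a ≤ x * q ^ b) : (a : ℝ) - b ≤ logb q x := by
  have hx : x ≠ 0 := by
    rintro rfl
    exact (pow_pos (by omega) a).ne' (Nat.le_zero.1 (zero_mul (q ^ b) ▸ h))
  have hq' : (1 : ℝ) < q := by exact_mod_cast hq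
  have h' : (q : ℝ) ^ a ≤ x * q ^ b := by exact_mod_cast h
  have := logb_le_logb_of_le hq' (by positivity) h'
  rw [logb_mul (by positivity) (by positivity), logb_pow, logb_pow, logb_self_eq_one hq'] at this
  linarith

theorem logb_le_natCast_sub_of_mul_pow_le_pow {q a b x : ℕ} (hq : 1 < q) (hx : x ≠ 0)
    (h : x * q ^ b ≤ q ^ a) : logb q x ≤ a - b := by
  have hq' : (1 : ℝ) < q := by exact_mod_cast hq
  have h' : (x : ℝ) * q ^ b ≤ q ^ a := by exact_mod_cast h
  have := logb_le_logb_of_le hq' (by positivity) h'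
  rw [logb_mul (by positivity) (by positivity), logb_pow, logb_pow, logb_self_eq_one hq'] at this
  linarith

end Real

namespace Matrix

theorem mul_right_injective_of_linearIndependent_col {R ι κ ν : Type*} [CommSemiring R]
    [Fintype κ] {A : Matrix ι κ R} (hA : LinearIndependent R A.col) :
    Function.Injective (fun B : Matrix κ ν R => A * B) :=
  fun _ _ hBC => ext_col fun j => mulVec_injective_iff.2 hA congr(($hBC).col j)

theorem rank_fromCols_mul_self {R ι κ σ : Type*} [CommRing R] [StrongRankCondition R]
    [Fintype κ] [Fintype σ] [DecidableEq σ] (B : Matrix ι σ R) (X : Matrix σ κ R) :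
    (fromCols B (B * X)).rank = B.rank := by
  refine le_antisymm ?_ ?_
  · calc (fromCols B (B * X)).rank = (B * fromCols 1 X).rank := by
          rw [mul_fromCols, Matrix.mul_one]
      _ ≤ B.rank := rank_mul_le_left _ _
  · let P : Matrix (σ ⊕ κ) σ R := fromRows 1 0
    have hP : fromCols B (B * X) * P = B := by simp [P, fromCols_mul_fromRows]
    calc B.rank = (fromCols B (B * X) * P).rank := by rw [hP]
      _ ≤ _ := rank_mul_le_left _ P

theorem natCard_eq_pow (m n R : Type*) [Fintype m] [Fintype n] [Fintype R] :
    Nat.card (Matrix m n R) = Fintype.card R ^ (Fintype.card m * Fintype.card n) := by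
  change Nat.card (m → n → R) = _
  simp only [Nat.card_fun, Nat.card_eq_fintype_card, ← pow_mul, mul_comm]

variable {F : Type*} [Field F] {ι κ : Type*} [Fintype κ]

theorem card_rank_eq_congr {κ' : Type*} [Fintype κ'] (e : κ ≃ κ') (s : ℕ) :
    Nat.card {M : Matrix ι κ F // M.rank = s} = Nat.card {M : Matrix ι κ' F // M.rank = s} :=
  Nat.card_congr <| (reindex (Equiv.refl ι) e).subtypeEquiv fun M => by rw [rank_reindex]

variable [Fintype ι]

theorem exists_mul_eq_of_rank_eq {s : ℕ} (M : Matrix ι κ F) (hM : M.rank = s) :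
    ∃ (B : Matrix ι (Fin s) F) (C : Matrix (Fin s) κ F), LinearIndependent F B.col ∧ B * C = M := by
  rw [rank_eq_finrank_span_cols] at hM
  set V := Submodule.span F (Set.range M.col)
  let b : Module.Basis (Fin s) F V := Module.finBasisOfFinrankEq F V hM
  have hcol : ∀ j, M.col j ∈ V := fun j => Submodule.subset_span ⟨j, rfl⟩
  refine ⟨of fun i k => (b k : ι → F) i, of fun k j => b.repr ⟨M.col j, hcol j⟩ k, ?_, ?_⟩
  · exact b.linearIndependent.map' V.subtype V.ker_subtype
  · ext i j
    have := congrFun (congrArg Subtype.val (b.sum_repr ⟨M.col j, hcol j⟩)) i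
    simp only [AddSubmonoidClass.coe_finsetSum, Finset.sum_apply, SetLike.val_smul,
      Pi.smul_apply, smul_eq_mul] at this
    simp only [mul_apply, of_apply, mul_comm ((b _ : ι → F) i)]
    exact this

section Card

variable [Fintype F]

local notation "q" => Fintype.card F

theorem card_rank_eq_mul_card_GL_le (s : ℕ) :
    Nat.card {M : Matrix ι κ F // M.rank = s} * Nat.card (GL (Fin s) F) ≤
      Nat.card (Matrix ι (Fin s) F × Matrix (Fin s) κ F) := by
  choose B C hB hBC using
    fun M : {M : Matrix ι κ F // M.rank = s} => exists_mul_eq_of_rank_eq M.1 M.2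
  let Φ (p : {M : Matrix ι κ F // M.rank = s} × GL (Fin s) F) :
      Matrix ι (Fin s) F × Matrix (Fin s) κ F :=
    (B p.1 * (p.2 : Matrix (Fin s) (Fin s) F), (↑p.2⁻¹ : Matrix (Fin s) (Fin s) F) * C p.1)
  have hΦ (p) : (Φ p).1 * (Φ p).2 = p.1 := by
    simp [Φ, Matrix.mul_assoc, ← Matrix.mul_assoc (p.2 : Matrix (Fin s) (Fin s) F), hBC]
  have hinj : Function.Injective Φ := by
    rintro ⟨M, G⟩ ⟨M', G'⟩ h
    obtain rfl : M = M' := Subtype.ext <| by rw [← hΦ (M, G), ← hΦ (M', G'), h]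
    have hG : B M * (G : Matrix (Fin s) (Fin s) F) = B M * (G' : Matrix (Fin s) (Fin s) F) :=
      congrArg Prod.fst h
    rw [Units.ext (mul_right_injective_of_linearIndependent_col (hB M) hG)]
  rw [← Nat.card_prod]
  exact Nat.card_le_card_of_injective Φ hinj

theorem card_linearIndependent_mul_card_le_card_rank_eq (s : ℕ) :
    Nat.card {v : Fin s → ι → F // LinearIndependent F v} * Nat.card (Matrix (Fin s) κ F) ≤
      Nat.card {M : Matrix ι (Fin s ⊕ κ) F // M.rank = s} := by
  let Ψ (p : {v : Fin s → ι → F // LinearIndependent F v} × Matrix (Fin s) κ F) :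
      {M : Matrix ι (Fin s ⊕ κ) F // M.rank = s} :=
    ⟨fromCols (of p.1.1)ᵀ ((of p.1.1)ᵀ * p.2), by
      rw [rank_fromCols_mul_self, rank_transpose]
      exact (p.1.2.rank_matrix (M := of p.1.1)).trans (Fintype.card_fin s)⟩
  have hinj : Function.Injective Ψ := by
    rintro ⟨⟨v, hv⟩, X⟩ ⟨⟨v', hv'⟩, X'⟩ h
    obtain ⟨hvv, hXX⟩ := fromCols_inj (congrArg Subtype.val h)
    obtain rfl : v = v' := congrArg (fun B => (B : Matrix ι (Fin s) F).col) hvv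
    change (of v)ᵀ * X = (of v)ᵀ * X' at hXX
    rw [mul_right_injective_of_linearIndependent_col hv hXX]
  rw [← Nat.card_prod]
  exact Nat.card_le_card_of_injective Ψ hinj

theorem card_rank_eq_mul_pow_le (s : ℕ) :
    Nat.card {M : Matrix ι κ F // M.rank = s} * q ^ (s * s) ≤
      q ^ (s * (Fintype.card ι + Fintype.card κ) + s) := by
  have hGL :=
    Nat.pow_mul_le_prod_pow_sub_pow_mul_pow (Fintype.one_lt_card (α := F)) le_rfl (k := s)
  rw [← card_GL_field] at hGL
  have hA := card_rank_eq_mul_card_GL_le (F := F) (ι := ι) (κ := κ) s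
  rw [Nat.card_prod, natCard_eq_pow, natCard_eq_pow, Fintype.card_fin] at hA
  calc _ ≤ Nat.card {M : Matrix ι κ F // M.rank = s} * (Nat.card (GL (Fin s) F) * q ^ s) := by
        gcongr
    _ = Nat.card {M : Matrix ι κ F // M.rank = s} * Nat.card (GL (Fin s) F) * q ^ s :=
        (mul_assoc ..).symm
    _ ≤ q ^ (Fintype.card ι * s) * q ^ (s * Fintype.card κ) * q ^ s :=
        Nat.mul_le_mul_right _ hA
    _ = _ := by ring

theorem pow_le_card_rank_eq_mul_pow {s : ℕ} (hsι : s ≤ Fintype.card ι)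
    (hsκ : s ≤ Fintype.card κ) :
    q ^ (s * (Fintype.card ι + Fintype.card κ)) ≤
      Nat.card {M : Matrix ι κ F // M.rank = s} * q ^ (s * s + s) := by
  have hLI := Nat.pow_mul_le_prod_pow_sub_pow_mul_pow (Fintype.one_lt_card (α := F)) hsι
  have hA := card_linearIndependent_mul_card_le_card_rank_eq (F := F) (ι := ι)
    (κ := Fin (Fintype.card κ - s)) s
  rw [card_linearIndependent (by simpa using hsι), Module.finrank_fintype_fun_eq_card,
    natCard_eq_pow, Fintype.card_fin, Fintype.card_fin,
    card_rank_eq_congr (Fintype.equivOfCardEq (by simp; omega) : Fin s ⊕ _ ≃ κ)] at hA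
  have hexp : s * (Fintype.card ι + Fintype.card κ) =
      Fintype.card ι * s + s * (Fintype.card κ - s) + s * s := by
    rw [add_assoc, ← mul_add, Nat.sub_add_cancel hsκ]; ring
  rw [hexp, pow_add, pow_add]
  calc _ ≤ _ * q ^ s * q ^ (s * (Fintype.card κ - s)) * q ^ (s * s) := by gcongr
    _ = _ * q ^ (s * (Fintype.card κ - s)) * q ^ (s * s + s) := by ring
    _ ≤ _ := by gcongr

theorem abs_logb_card_rank_eq_sub_le {s : ℕ} (hsι : s ≤ Fintype.card ι)
    (hsκ : s ≤ Fintype.card κ) :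
    |Real.logb q (Nat.card {M : Matrix ι κ F // M.rank = s}) -
      s * (Fintype.card ι + Fintype.card κ - s)| ≤ s := by
  have hq := Fintype.one_lt_card (α := F)
  have hlow := Real.natCast_sub_le_logb_of_pow_le_mul_pow hq (pow_le_card_rank_eq_mul_pow hsι hsκ)
  have hA : Nat.card {M : Matrix ι κ F // M.rank = s} ≠ 0 := by
    have := (pow_le_card_rank_eq_mul_pow (F := F) hsι hsκ).trans_lt' (by positivity)
    exact left_ne_zero_of_mul (Nat.pos_iff_ne_zero.1 this)
  have hup := Real.logb_le_natCast_sub_of_mul_pow_le_pow hq hA (card_rank_eq_mul_pow_le s)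
  push_cast at hlow hup
  rw [abs_sub_le_iff]
  constructor <;> linarith

end Card

end Matrix

theorem tendsto_natCeil_mul_div {u : ℕ → ℕ} {c x : ℝ} (hc : 0 ≤ c)
    (hu : Tendsto (fun N => (u N : ℝ) / N) atTop (𝓝 x)) :
    Tendsto (fun N => (⌈c * u N⌉₊ : ℝ) / N) atTop (𝓝 (c * x)) := by
  have hupper := (hu.const_mul c).add tendsto_one_div_atTop_nhds_zero_nat
  rw [add_zero] at hupper
  refine tendsto_of_tendsto_of_tendsto_of_le_of_le (hu.const_mul c) hupper (fun N => ?_)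
    fun N => ?_
  · rw [← mul_div_assoc]
    exact div_le_div_of_nonneg_right (Nat.le_ceil _) N.cast_nonneg
  · rw [← mul_div_assoc, ← add_div]
    exact div_le_div_of_nonneg_right (Nat.ceil_lt_add_one (by positivity)).le N.cast_nonneg

theorem tendsto_div_mul_of_abs_sub_le {a : ℕ → ℝ} {l s : ℕ → ℕ} {x y : ℝ}
    (hl : Tendsto (fun N => (l N : ℝ) / N) atTop (𝓝 x)) (hx : x ≠ 0)
    (hs : Tendsto (fun N => (s N : ℝ) / N) atTop (𝓝 y)) (hsl : ∀ N, s N ≤ l N)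
    (ha : ∀ᶠ N in atTop, |a N - s N * (N - s N)| ≤ s N) :
    Tendsto (fun N => a N / (N * l N)) atTop (𝓝 (y * (1 - y) / x)) := by
  have hlN : ∀ᶠ N in atTop, (l N : ℝ) / N ≠ 0 := hl.eventually_ne hx
  have hmain : Tendsto (fun N => (s N / N : ℝ) * (1 - s N / N) / (l N / N)) atTop
      (𝓝 (y * (1 - y) / x)) := (hs.mul ((tendsto_const_nhds (x := (1 : ℝ))).sub hs)).div hl hx
  have herr : Tendsto (fun N => (a N - s N * (N - s N)) / (N * l N)) atTop (𝓝 0) := by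
    refine squeeze_zero_norm' ?_ tendsto_one_div_atTop_nhds_zero_nat
    filter_upwards [ha, hlN] with N haN hlN
    obtain ⟨hl0, hN0⟩ := div_ne_zero_iff.1 hlN
    have hN : (0 : ℝ) < N := lt_of_le_of_ne N.cast_nonneg hN0.symm
    have hpos : (0 : ℝ) < N * l N := mul_pos hN (lt_of_le_of_ne (l N).cast_nonneg hl0.symm)
    rw [Real.norm_eq_abs, abs_div, abs_of_pos hpos, div_le_div_iff₀ hpos hN]
    have : (s N : ℝ) ≤ l N := by exact_mod_cast hsl N
    nlinarith
  rw [← add_zero (y * (1 - y) / x)]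
  refine (hmain.add herr).congr' ?_
  filter_upwards [hlN] with N hlN
  obtain ⟨hl0, hN0⟩ := div_ne_zero_iff.1 hlN
  field_simp
  ring

theorem stmt_15_general (q : ℕ)
    (F : Type) [Field F] [Fintype F] (hq : Fintype.card F = q)
    (lam ω : ℝ) (hlam : lam ∈ Set.Ioo (0 : ℝ) 1) (hω : ω ∈ Set.Ioo (0 : ℝ) 1)
    (h : lam * ω < 1 - lam) :
    Filter.Tendsto (fun N : ℕ =>
        Real.logb q
            (Nat.card {M : Matrix (Fin ⌈lam * N⌉₊) (Fin (N - ⌈lam * N⌉₊)) F //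
              M.rank = ⌈ω * (⌈lam * N⌉₊ : ℝ)⌉₊}) /
          ((N : ℝ) * (⌈lam * N⌉₊ : ℝ)))
      Filter.atTop (nhds (ω - lam * ω ^ 2)) := by
  subst hq
  have hl : Tendsto (fun N : ℕ => (⌈lam * N⌉₊ : ℝ) / N) atTop (𝓝 lam) :=
    (tendsto_nat_ceil_mul_div_atTop hlam.1.le).comp tendsto_natCast_atTop_atTop
  have hs := tendsto_natCeil_mul_div hω.1.le hl
  have hsl (N : ℕ) : ⌈ω * ⌈lam * N⌉₊⌉₊ ≤ ⌈lam * N⌉₊ :=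
    Nat.ceil_le.2 (mul_le_of_le_one_left (Nat.cast_nonneg _) hω.2.le)
  have hlsN : ∀ᶠ N : ℕ in atTop, ⌈lam * N⌉₊ + ⌈ω * ⌈lam * N⌉₊⌉₊ < N := by
    filter_upwards [(hl.add hs).eventually (gt_mem_nhds (show lam + ω * lam < 1 by linarith)),
      eventually_ne_atTop 0] with N hN hN0
    rw [← add_div, div_lt_one (by positivity)] at hN
    exact_mod_cast hN
  convert tendsto_div_mul_of_abs_sub_le hl hlam.1.ne' hs hsl (hlsN.mono fun N hN => ?_) using 2
  · field_simp [hlam.1.ne']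
  · have := Matrix.abs_logb_card_rank_eq_sub_le (F := F) (ι := Fin ⌈lam * N⌉₊)
      (κ := Fin (N - ⌈lam * N⌉₊)) (s := ⌈ω * ⌈lam * N⌉₊⌉₊)
      (by rw [Fintype.card_fin]; exact hsl N) (by rw [Fintype.card_fin]; omega)
    simpa [Nat.cast_sub (by omega : ⌈lam * N⌉₊ ≤ N)] using this

/-- Asymptotics of the noise entropy in the symmetric network coding channel
SNC(λ,ω): with `ℓ_N = ⌈λN⌉`, `m_N = N - ℓ_N`, `s_N = ⌈ω ℓ_N⌉` and `A_N` the
number of `ℓ_N × m_N` matrices over `𝔽_q` of rank `s_N`,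
`log_q(A_N)/(N ℓ_N) → ω - λω²` as `N → ∞`. -/
theorem stmt_15 (q : ℕ) (hq2 : 2 ≤ q)
    (F : Type) [Field F] [Fintype F] (hq : Fintype.card F = q)
    (lam ω : ℝ) (hlam : lam ∈ Set.Ioo (0 : ℝ) 1) (hω : ω ∈ Set.Ioo (0 : ℝ) 1)
    (h : lam * ω < 1 - lam) :
    Filter.Tendsto (fun N : ℕ =>
        Real.logb q
            (Nat.card {M : Matrix (Fin ⌈lam * N⌉₊) (Fin (N - ⌈lam * N⌉₊)) F //
              M.rank = ⌈ω * (⌈lam * N⌉₊ : ℝ)⌉₊}) /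
          ((N : ℝ) * (⌈lam * N⌉₊ : ℝ)))
      Filter.atTop (nhds (ω - lam * ω ^ 2)) :=
  stmt_15_general q F hq lam ω hlam hω h
end
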